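/- Fix an integer d with 0 ≤ d ≤ n−1 and an element a ∈ R. If there exist elements b_1, …, b_d ∈ R such that a ∘ G_0 = Σ_{k=1}^{d} b_k ∘ G_k, then a ∈ I_d. -/

import Mathlib

open MvPolynomial

noncomputable section

variable {k : Type*} [Field k]

open Classical in
/-- Contraction action of `g ∈ k[x_1,…]` on `F ∈ k[X_1,…]`: the monomial `x^a` sends
`X^b` to `X^(b-a)` if `a ≤ b` and to `0` otherwise, extended bilinearly. -/
def contract {σ : Type*} (g F : MvPolynomial σ k) : MvPolynomial σ k :=
  ∑ a ∈ g.support, ∑ b ∈ F.support,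
    if a ≤ b then monomial (b - a) (g.coeff a * F.coeff b) else 0

/-- The annihilator `Ann(F) = {g : g ∘ F = 0}` (a set; it is in fact an ideal). -/
def annSet {σ : Type*} (F : MvPolynomial σ k) : Set (MvPolynomial σ k) :=
  {g | contract g F = 0}

/-- The annihilator ideal of `F` (since `annSet F` is closed under the ideal operations,
the span coincides with it). -/
def annIdeal {σ : Type*} (F : MvPolynomial σ k) : Ideal (MvPolynomial σ k) :=
  Ideal.span (annSet F)

/-- `C` is a free module over `A` via the ring map `ι : A → C`. -/
def freeVia {A C : Type*} [CommRing A] [CommRing C] (ι : A →+* C) : Prop :=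
  @Module.Free A C _ _ (Module.compHom C ι)

/-
`I_{d+1} = (I_d : Ann(G_{d+1}))`, so for `a ∈ I_{d+1}` it suffices that `p a ∈ I_d` for every
`p ∈ Ann(G_{d+1})`. Contracting the relation `a ∘ G_0 = Σ_{j ≤ d+1} b_j ∘ G_j` by `p` kills the
last term (since `p b_{d+1} ∘ G_{d+1} = b_{d+1} ∘ (p ∘ G_{d+1}) = 0`) and leaves a relation of
the same shape for `p a` and the `p b_j`, `j ≤ d`; induction on `d` concludes, the case `d = 0`
being `a ∘ G_0 = 0`.
-/

section Contraction

variable {σ : Type*}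

lemma coeff_contract (g F : MvPolynomial σ k) (m : σ →₀ ℕ) :
    coeff m (contract g F) = ∑ a ∈ g.support, g.coeff a * F.coeff (a + m) := by
  classical
  simp only [contract, coeff_sum]
  refine Finset.sum_congr rfl fun a _ => ?_
  have hterm : ∀ b ∈ F.support,
      coeff m (if a ≤ b then monomial (b - a) (g.coeff a * F.coeff b) else 0)
        = if b = a + m then g.coeff a * F.coeff b else 0 := by
    intro b _
    by_cases hab : a ≤ b
    · rw [if_pos hab, coeff_monomial]
      congr 1
      exact propext ⟨fun h => by rw [← h, add_tsub_cancel_of_le hab],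
        fun h => by rw [h, add_tsub_cancel_left]⟩
    · rw [if_neg hab, if_neg (by rintro rfl; exact hab le_self_add), coeff_zero]
  rw [Finset.sum_congr rfl hterm, Finset.sum_ite_eq']
  split_ifs with h
  · rfl
  · rw [notMem_support_iff.mp h, mul_zero]

lemma coeff_contract_of_support_subset {g : MvPolynomial σ k} {S : Finset (σ →₀ ℕ)}
    (hS : g.support ⊆ S) (F : MvPolynomial σ k) (m : σ →₀ ℕ) :
    coeff m (contract g F) = ∑ a ∈ S, g.coeff a * F.coeff (a + m) :=
  (coeff_contract g F m).trans <|
    Finset.sum_subset hS fun a _ ha => by rw [notMem_support_iff.mp ha, zero_mul]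

lemma contract_zero_left (F : MvPolynomial σ k) : contract 0 F = 0 := by
  ext m; simp [coeff_contract]

lemma contract_zero_right (g : MvPolynomial σ k) : contract g 0 = 0 := by
  ext m; simp [coeff_contract]

lemma contract_add_left (g g' F : MvPolynomial σ k) :
    contract (g + g') F = contract g F + contract g' F := by
  classical
  ext m
  rw [coeff_add, coeff_contract_of_support_subset support_add,
    coeff_contract_of_support_subset Finset.subset_union_left,
    coeff_contract_of_support_subset Finset.subset_union_right, ← Finset.sum_add_distrib]
  exact Finset.sum_congr rfl fun a _ => by rw [coeff_add, add_mul]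

lemma contract_add_right (g F F' : MvPolynomial σ k) :
    contract g (F + F') = contract g F + contract g F' := by
  ext m
  simp [coeff_contract, mul_add, Finset.sum_add_distrib]

lemma contract_sum_right {ι : Type*} (g : MvPolynomial σ k) (s : Finset ι)
    (F : ι → MvPolynomial σ k) :
    contract g (∑ j ∈ s, F j) = ∑ j ∈ s, contract g (F j) :=
  map_sum (AddMonoidHom.mk' (contract g) (contract_add_right g)) F s

lemma coeff_contract_monomial (s : σ →₀ ℕ) (c : k) (F : MvPolynomial σ k) (m : σ →₀ ℕ) :
    coeff m (contract (monomial s c) F) = c * F.coeff (s + m) := by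
  classical
  rw [coeff_contract_of_support_subset support_monomial_subset]
  simp [coeff_monomial]

lemma contract_mul (g h F : MvPolynomial σ k) :
    contract (g * h) F = contract g (contract h F) := by
  induction g using MvPolynomial.induction_on' with
  | add p q hp hq => rw [add_mul, contract_add_left, hp, hq, contract_add_left]
  | monomial u c =>
    induction h using MvPolynomial.induction_on' with
    | add p q hp hq =>
      rw [mul_add, contract_add_left, hp, hq, contract_add_left, contract_add_right]
    | monomial v e =>
      ext m
      rw [monomial_mul, coeff_contract_monomial, coeff_contract_monomial,
        coeff_contract_monomial, ← mul_assoc, add_comm u v, add_assoc]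

lemma mem_annIdeal_iff {F g : MvPolynomial σ k} : g ∈ annIdeal F ↔ contract g F = 0 := by
  refine ⟨fun hg => ?_, fun hg => Ideal.subset_span hg⟩
  induction hg using Submodule.span_induction with
  | mem x hx => exact hx
  | zero => exact contract_zero_left F
  | add x y _ _ hx hy => rw [contract_add_left, hx, hy, add_zero]
  | smul c x _ hx => rw [smul_eq_mul, contract_mul, hx, contract_zero_right]

end Contraction

theorem lemma_Id_general (r : ℕ)
    (G : ℕ → MvPolynomial (Fin r) k)
    (I : ℕ → Ideal (MvPolynomial (Fin r) k))
    (hI0 : I 0 = annIdeal (G 0))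
    (hIsucc : ∀ i, I (i + 1) = (I i).colon (annIdeal (G (i + 1))))
    (d : ℕ) (a : MvPolynomial (Fin r) k)
    (b : ℕ → MvPolynomial (Fin r) k)
    (hab : contract a (G 0) = ∑ j ∈ Finset.Icc 1 d, contract (b j) (G j)) :
    a ∈ I d := by
  induction d generalizing a b with
  | zero => simpa [hI0, mem_annIdeal_iff] using hab
  | succ d ih =>
    rw [hIsucc d, Submodule.mem_colon]
    intro p hp
    have hlast : contract p (contract (b (d + 1)) (G (d + 1))) = 0 := by
      rw [← contract_mul, mul_comm, contract_mul, mem_annIdeal_iff.mp hp, contract_zero_right]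
    rw [smul_eq_mul, mul_comm]
    refine ih (p * a) (fun j => p * b j) ?_
    rw [contract_mul, hab, contract_sum_right, Finset.sum_Icc_succ_top (by omega), hlast,
      add_zero]
    exact Finset.sum_congr rfl fun j _ => (contract_mul p (b j) (G j)).symm

/-- Lemma 3.5.  Let `G_0 ∈ Q` be nonzero homogeneous, `G_i` homogeneous of degree
`deg G_0 + i`, and let `I_0 = Ann(G_0)`, `I_i = (I_{i-1} : Ann(G_i))`.  Fix `0 ≤ d ≤ n-1`
and `a ∈ R`.  If `a ∘ G_0 = Σ_{k=1}^{d} b_k ∘ G_k` for some `b_1, …, b_d ∈ R`,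
then `a ∈ I_d`. -/
theorem lemma_Id (r n : ℕ) (hn : 1 ≤ n) (jB : ℕ)
    (G : ℕ → MvPolynomial (Fin r) k) (hG0 : G 0 ≠ 0)
    (hGhom : ∀ i < n, (G i).IsHomogeneous (jB + i))
    (I : ℕ → Ideal (MvPolynomial (Fin r) k))
    (hI0 : I 0 = annIdeal (G 0))
    (hIsucc : ∀ i, I (i + 1) = (I i).colon (annIdeal (G (i + 1))))
    (d : ℕ) (hd : d ≤ n - 1) (a : MvPolynomial (Fin r) k)
    (b : ℕ → MvPolynomial (Fin r) k)
    (hab : contract a (G 0) = ∑ j ∈ Finset.Icc 1 d, contract (b j) (G j)) :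
    a ∈ I d :=
  lemma_Id_general r G I hI0 hIsucc d a b hab

end
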